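/- Assume the carrier of the interpretation D for the constraints contains at least one element different from 0, and consider the programs P₀ = { p ← ¬r(X), r(X) ← X = 0 } and P₂ = { p ← ¬q, r(X) ← X = 0, q ← r(Y) }. Then p ∈ M(P₀) while p ∉ M(P₂). (P₂ is obtained by folding p ← ¬r(X) using q ← r(Y) with a substitution satisfying conditions (i) and (ii) of the positive folding rule but with FV(q) ≠ FV(r(X)), showing that a negative folding rule with the weaker variable conditions of positive folding would be incorrect.) -/

import Mathlib

namespace CLP

/-! ### The set `W` of countable ordinals -/

/-- `W` : the set of countable ordinals. -/
abbrev W : Type 1 := {o : Ordinal.{0} // o < (Cardinal.aleph 1).ord}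

theorem natW_lt (n : ℕ) : (n : Ordinal.{0}) < (Cardinal.aleph 1).ord := by
  refine Cardinal.lt_ord.mpr ?_
  simpa using (Cardinal.nat_lt_aleph0 n).trans Cardinal.aleph0_lt_aleph_one

/-- natural numbers as countable ordinals -/
def natW (n : ℕ) : W := ⟨n, natW_lt n⟩

/-- the zero ordinal as an element of `W` -/
def zeroW : W := natW 0

theorem succW_lt {o : Ordinal.{0}} (h : o < (Cardinal.aleph 1).ord) :
    o + 1 < (Cardinal.aleph 1).ord := by
  have hlim : Order.IsSuccLimit ((Cardinal.aleph 1).ord) :=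
    Cardinal.isSuccLimit_ord (Cardinal.aleph0_le_aleph 1)
  rw [← Order.succ_eq_add_one]
  exact hlim.succ_lt h

/-- the successor operation on countable ordinals (`σ(A) + 1`) -/
def succW (o : W) : W := ⟨o.1 + 1, succW_lt o.2⟩

/-! ### Syntax and semantics of constraint logic programs

Atoms, constraints, and clauses are represented semantically: an atom with variables
in `V` is a user-defined predicate symbol (from `Pu`) together with the function
mapping each valuation `v : V → D` to the tuple of values of its argument terms, and a
constraint is represented by its satisfaction predicate on valuations (the
interpretation `𝒟` for the constraints, with carrier `D`, is thereby fixed). -/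

/-- An atom: a user-defined predicate symbol together with its (semantically
represented) tuple of argument terms. -/
structure SAtm (V D Pu : Type) where
  pred : Pu
  args : (V → D) → List D

/-- Ground atoms: the base `B_𝒟` is `{p(d₁,…,dₙ) | p ∈ Pred_u, dᵢ ∈ D}`. -/
abbrev GrAtm (Pu D : Type) := Pu × List D

variable {V D Pu : Type}

/-- the ground atom `v(A)` obtained by applying the valuation `v` to the atom `A` -/
def SAtm.eval (A : SAtm V D Pu) (v : V → D) : GrAtm Pu D := (A.pred, A.args v)

/-- A clause `H ← c ∧ L₁ ∧ … ∧ Lₘ`: a head atom `H`, a constraint `c`, and a body,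
i.e. a list of literals; a literal is a pair of a sign (`true` = positive literal `A`,
`false` = negative literal `¬A`) and an atom. -/
structure SClause (V D Pu : Type) where
  head : SAtm V D Pu
  constr : (V → D) → Prop
  body : List (Bool × SAtm V D Pu)

/-- A constraint logic program: a set of clauses (finiteness is stated separately). -/
abbrev SProg (V D Pu : Type) := Set (SClause V D Pu)

/-- truth of a ground literal in a `D`-interpretation `I` -/
def litTrue (I : Set (GrAtm Pu D)) (l : Bool × GrAtm Pu D) : Prop :=
  if l.1 then l.2 ∈ I else l.2 ∉ I

/-- truth of the ground instance `v(γ)` of the clause `γ` in the `D`-interpretation `I` -/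
def SClause.groundTrue (γ : SClause V D Pu) (I : Set (GrAtm Pu D)) (v : V → D) : Prop :=
  γ.constr v → (∀ l ∈ γ.body, litTrue I (l.1, l.2.eval v)) → γ.head.eval v ∈ I

/-- `I` is a `D`-model of the program `P` -/
def isModel (I : Set (GrAtm Pu D)) (P : SProg V D Pu) : Prop :=
  ∀ γ ∈ P, ∀ v, γ.groundTrue I v

/-- the ground instance `v(γ)` of the clause `γ` is locally stratified w.r.t. `σ` -/
def SClause.locStrat (σ : GrAtm Pu D → W) (γ : SClause V D Pu) (v : V → D) : Prop :=
  γ.constr v → ∀ l ∈ γ.body,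
    (l.1 = true → σ (l.2.eval v) ≤ σ (γ.head.eval v)) ∧
    (l.1 = false → σ (l.2.eval v) < σ (γ.head.eval v))

/-- `P` is locally stratified w.r.t. the local stratification `σ : B_𝒟 → W` -/
def locStratWrt (σ : GrAtm Pu D → W) (P : SProg V D Pu) : Prop :=
  ∀ γ ∈ P, ∀ v, γ.locStrat σ v

/-- `P` is locally stratified -/
def LocallyStratified (P : SProg V D Pu) : Prop := ∃ σ, locStratWrt σ P

/-- `I ≺ J` : `I` is preferable to `J` w.r.t. the local stratification `σ` -/
def pref (σ : GrAtm Pu D → W) (I J : Set (GrAtm Pu D)) : Prop :=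
  ∀ A₁ ∈ I \ J, ∃ A₂ ∈ J \ I, σ A₂ < σ A₁

/-- `M` is a perfect model of `P` w.r.t. the local stratification `σ`:
a `D`-model preferable to every other `D`-model of `P` -/
def PerfectModelWrt (σ : GrAtm Pu D → W) (P : SProg V D Pu) (M : Set (GrAtm Pu D)) : Prop :=
  isModel M P ∧ ∀ N, isModel N P → N ≠ M → pref σ M N

/-- `M` is a perfect model of `P` (w.r.t. some local stratification for `P`) -/
def IsPerfectModel (P : SProg V D Pu) (M : Set (GrAtm Pu D)) : Prop :=
  ∃ σ, locStratWrt σ P ∧ PerfectModelWrt σ P M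

/-! ### Predicate dependencies -/

/-- the predicate `p` immediately depends on the predicate `q` in `P` -/
def immDep (P : SProg V D Pu) (p q : Pu) : Prop :=
  ∃ γ ∈ P, γ.head.pred = p ∧ ∃ l ∈ γ.body, (l.2).pred = q

/-- the predicate `p` depends on the predicate `q` in `P` -/
def dependsOn (P : SProg V D Pu) : Pu → Pu → Prop := Relation.TransGen (immDep P)

/-- `Def(p, P)` : the definition of the predicate `p` in `P` -/
def DefOf (p : Pu) (P : SProg V D Pu) : SProg V D Pu := {γ ∈ P | γ.head.pred = p}

/-! ### Proof trees -/

/-- Finite trees whose internal nodes are ground atoms; the children of a node are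
either subtrees (corresponding to positive literals) or leaves labelled by a ground
atom `B` (corresponding to negative literals `¬B`). A node with the empty list of
children is a node whose unique child is the empty conjunction `true`. -/
inductive PT (Pu D : Type) : Type where
  | node (A : GrAtm Pu D) (children : List (PT Pu D ⊕ GrAtm Pu D)) : PT Pu D

/-- the ground atom at the root of a tree -/
def PT.root : PT Pu D → GrAtm Pu D
  | .node A _ => A

/-- the ground literal corresponding to a child of a node of a tree -/
def childLit : PT Pu D ⊕ GrAtm Pu D → Bool × GrAtm Pu D
  | .inl t => (true, t.root)
  | .inr B => (false, B)

/-- Validity of a tree w.r.t. a program `P` and an "oracle" `O` for the negative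
leaves: each node `A` with children `L₁,…,Lᵣ` must be obtained from a ground instance
`A ← c ∧ L₁ ∧ … ∧ Lᵣ` (with `𝒟 ⊨ c`) of a clause of `P`, and every negative leaf
`¬B` must satisfy `O B`. -/
inductive PT.ValidW (P : SProg V D Pu) (O : GrAtm Pu D → Prop) : PT Pu D → Prop where
  | node {A : GrAtm Pu D} {cs : List (PT Pu D ⊕ GrAtm Pu D)}
      (hc : ∃ γ ∈ P, ∃ v, γ.constr v ∧ γ.head.eval v = A ∧
        γ.body.map (fun l => (l.1, l.2.eval v)) = cs.map childLit)
      (hpos : ∀ t, Sum.inl t ∈ cs → PT.ValidW P O t)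
      (hneg : ∀ B, Sum.inr B ∈ cs → O B) :
      PT.ValidW P O (.node A cs)

/-- `HasPTAux σ P α A` holds iff there is a proof tree for `A` and `P`, where a
negative leaf `¬B` is allowed only if there is no proof tree for `B` and `P` among
the proof trees for ground atoms of stratum `< α`. -/
def HasPTAux (σ : GrAtm Pu D → W) (P : SProg V D Pu) (α : W) (A : GrAtm Pu D) : Prop :=
  ∃ T : PT Pu D, T.root = A ∧
    PT.ValidW P (fun B => ∀ _hlt : σ B < α, ¬ HasPTAux σ P (σ B) B) T
termination_by α.1
decreasing_by exact _hlt

/-- there exists a proof tree for the ground atom `A` and the program `P` -/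
def HasProofTree (σ : GrAtm Pu D → W) (P : SProg V D Pu) (A : GrAtm Pu D) : Prop :=
  HasPTAux σ P (σ A) A

/-- `T` is a proof tree for the ground atom `A` and the program `P` -/
def IsProofTree (σ : GrAtm Pu D → W) (P : SProg V D Pu) (A : GrAtm Pu D) (T : PT Pu D) : Prop :=
  T.root = A ∧
    PT.ValidW P (fun B => ∀ _hlt : σ B < σ A, ¬ HasPTAux σ P (σ B) B) T

/-! ### The measure `μ` -/

mutual
  /-- `size(T)` : the number of atoms occurring at non-leaf nodes of `T` -/
  inductive PT.HasSize : PT Pu D → ℕ → Prop where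
    | node {A cs n} : ChildrenSize cs n → PT.HasSize (.node A cs) (1 + n)
  /-- total size of the subtrees among a list of children -/
  inductive ChildrenSize : List (PT Pu D ⊕ GrAtm Pu D) → ℕ → Prop where
    | nil : ChildrenSize [] 0
    | inl {t cs n m} : PT.HasSize t n → ChildrenSize cs m →
        ChildrenSize (Sum.inl t :: cs) (n + m)
    | inr {B cs m} : ChildrenSize cs m → ChildrenSize (Sum.inr B :: cs) m
end

/-- the (non-strict) lexicographic ordering `≤_lex` on `W × ℕ` -/
def wnLE (a b : W × ℕ) : Prop := a.1 < b.1 ∨ (a.1 = b.1 ∧ a.2 ≤ b.2)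

/-- the strict lexicographic ordering `<_lex` on `W × ℕ` -/
def wnLT (a b : W × ℕ) : Prop := a.1 < b.1 ∨ (a.1 = b.1 ∧ a.2 < b.2)

/-- `⟨α₁,m₁⟩ ⊕ ⟨α₂,m₂⟩ = ⟨max(α₁,α₂), m₁+m₂⟩` -/
noncomputable def oplus (a b : W × ℕ) : W × ℕ := (max a.1 b.1, a.2 + b.2)

/-- `μ(A,P) = min_lex {⟨σ(A), size(T)⟩ | T is a proof tree for A and P}`:
`muAtomIs σ P A m` states that `μ(A,P)` is defined and equal to `m`. -/
def muAtomIs (σ : GrAtm Pu D → W) (P : SProg V D Pu) (A : GrAtm Pu D) (m : W × ℕ) : Prop :=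
  (∃ (T : PT Pu D) (sz : ℕ), IsProofTree σ P A T ∧ T.HasSize sz ∧ m = (σ A, sz)) ∧
  (∀ (T : PT Pu D) (sz : ℕ), IsProofTree σ P A T → T.HasSize sz → wnLE m (σ A, sz))

/-- `μ` on ground literals: `μ(A,P)` for an atom, `⟨σ(A),0⟩` for a negated atom `¬A` -/
def muLitIs (σ : GrAtm Pu D → W) (P : SProg V D Pu) :
    Bool × GrAtm Pu D → W × ℕ → Prop
  | (true, A), m => muAtomIs σ P A m
  | (false, A), m => m = (σ A, 0)

/-- `μ(L₁ ∧ … ∧ Lₙ, P) = μ(L₁,P) ⊕ … ⊕ μ(Lₙ,P)` -/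
inductive muGoalIs (σ : GrAtm Pu D → W) (P : SProg V D Pu) :
    List (Bool × GrAtm Pu D) → W × ℕ → Prop where
  | nil : muGoalIs σ P [] (zeroW, 0)
  | cons {l G m mg} : muLitIs σ P l m → muGoalIs σ P G mg →
      muGoalIs σ P (l :: G) (oplus m mg)

end CLP

namespace Stmt14

open CLP

/-- the user-defined predicate symbols `p`, `q` and `r` -/
inductive Pd where
  | p | q | r
deriving DecidableEq

variable (D : Type) (z : D)

/-- the atom `p` (0-ary) -/
def atomP : SAtm Unit D Pd := ⟨Pd.p, fun _ => []⟩
/-- the atom `q` (0-ary) -/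
def atomQ : SAtm Unit D Pd := ⟨Pd.q, fun _ => []⟩
/-- the atom `r(X)` (also used for `r(Y)`: the choice of the variable name is
immaterial in the semantic representation of atoms) -/
def atomRX : SAtm Unit D Pd := ⟨Pd.r, fun v => [v ()]⟩

/-- `P₀ = { p ← ¬r(X),  r(X) ← X = 0 }` (`z` plays the role of `0`) -/
def P0 : SProg Unit D Pd :=
  { ⟨atomP D, fun _ => True, [(false, atomRX D)]⟩,
    ⟨atomRX D, fun v => v () = z, []⟩ }

/-- `P₂ = { p ← ¬q,  r(X) ← X = 0,  q ← r(Y) }` -/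
def P2 : SProg Unit D Pd :=
  { ⟨atomP D, fun _ => True, [(false, atomQ D)]⟩,
    ⟨atomRX D, fun v => v () = z, []⟩,
    ⟨atomQ D, fun _ => True, [(true, atomRX D)]⟩ }

end Stmt14

namespace CLP

variable {V D Pu : Type}

theorem natW_strictMono : StrictMono natW := fun a b h => by
  simp only [natW, Subtype.mk_lt_mk]
  exact_mod_cast h

theorem locStratWrt.lt_of_neg_mem {σ : GrAtm Pu D → W} {P : SProg V D Pu}
    (hσ : locStratWrt σ P) {γ : SClause V D Pu} (hγ : γ ∈ P) {v : V → D} (hc : γ.constr v)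
    {A : SAtm V D Pu} (hA : (false, A) ∈ γ.body) : σ (A.eval v) < σ (γ.head.eval v) :=
  (hσ γ hγ v hc _ hA).2 rfl

theorem pref_of_subset (σ : GrAtm Pu D → W) {I J : Set (GrAtm Pu D)} (h : I ⊆ J) :
    pref σ I J := fun _ hA => absurd (h hA.1) hA.2

theorem PerfectModelWrt.exists_lt_of_mem_diff {σ : GrAtm Pu D → W} {P : SProg V D Pu}
    {M N : Set (GrAtm Pu D)} (hM : PerfectModelWrt σ P M) (hN : isModel N P)
    {A : GrAtm Pu D} (hA : A ∈ M \ N) : ∃ B ∈ N \ M, σ B < σ A :=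
  hM.2 N hN (fun h => hA.2 (h ▸ hA.1)) A hA

theorem PerfectModelWrt.eq_of_subset {σ : GrAtm Pu D → W} {P : SProg V D Pu}
    {M N : Set (GrAtm Pu D)} (hM : PerfectModelWrt σ P M) (hN : isModel N P) (hNM : N ⊆ M) :
    N = M := by
  refine hNM.antisymm fun A hAM => by_contra fun hAN => ?_
  obtain ⟨B, hB, -⟩ := hM.exists_lt_of_mem_diff hN ⟨hAM, hAN⟩
  exact hB.2 (hNM hB.1)

theorem perfectModelWrt_of_isLeast (σ : GrAtm Pu D → W) {P : SProg V D Pu}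
    {M : Set (GrAtm Pu D)} (hM : IsLeast {N | isModel N P} M) : PerfectModelWrt σ P M :=
  ⟨hM.1, fun _ hN _ => pref_of_subset σ (hM.2 hN)⟩

theorem IsPerfectModel.eq_of_isLeast {P : SProg V D Pu} {M L : Set (GrAtm Pu D)}
    (hM : IsPerfectModel P M) (hL : IsLeast {N | isModel N P} L) : M = L := by
  obtain ⟨_, -, hperf⟩ := hM
  exact (hperf.eq_of_subset hL.1 (hL.2 hperf.1)).symm

end CLP

namespace Stmt14

open CLP

variable {D : Type} {z : D}

def pStrat : GrAtm Pd D → W := fun A => if A.1 = Pd.p then natW 1 else natW 0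

theorem pStrat_lt_pStrat_p {A : GrAtm Pd D} (hA : A.1 ≠ Pd.p) :
    pStrat A < pStrat ((Pd.p, []) : GrAtm Pd D) := by
  simpa [pStrat, hA] using natW_strictMono zero_lt_one

variable (D z) in
def M0 : Set (GrAtm Pd D) := {(Pd.p, []), (Pd.r, [z])}

variable (D z) in
def M2 : Set (GrAtm Pd D) := {(Pd.q, []), (Pd.r, [z])}

theorem locStratWrt_pStrat_P0 : locStratWrt pStrat (P0 D z) := by
  rintro γ (rfl | rfl) v - l hl <;> simp_all [atomP, atomRX, SAtm.eval, pStrat_lt_pStrat_p]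

theorem locStratWrt_pStrat_P2 : locStratWrt pStrat (P2 D z) := by
  rintro γ (rfl | rfl | rfl) v - l hl
  · simp_all [atomP, atomQ, SAtm.eval, pStrat_lt_pStrat_p]
  · simp_all
  · simp_all [atomQ, atomRX, SAtm.eval, pStrat]

theorem r_zero_mem_of_isModel_P0 {N : Set (GrAtm Pd D)} (hN : isModel N (P0 D z)) :
    (Pd.r, [z]) ∈ N :=
  hN _ (Or.inr rfl) (fun _ => z) rfl (by simp)

theorem r_mem_of_isModel_P0_of_p_notMem {N : Set (GrAtm Pd D)} (hN : isModel N (P0 D z))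
    (hp : (Pd.p, []) ∉ N) (d : D) : (Pd.r, [d]) ∈ N := by
  by_contra hr
  exact hp (hN _ (Or.inl rfl) (fun _ => d) trivial (by simpa [litTrue, SAtm.eval, atomRX]))

theorem isModel_M0 : isModel (M0 D z) (P0 D z) := by
  rintro γ (rfl | rfl) v hc -
  · exact Or.inl rfl
  · exact Or.inr (by simp_all [SAtm.eval, atomRX])

theorem perfectModelWrt_M0 (hD : ∃ d : D, d ≠ z) :
    PerfectModelWrt pStrat (P0 D z) (M0 D z) := by
  refine ⟨isModel_M0, fun N hN _ A hA => ?_⟩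
  obtain ⟨d, hd⟩ := hD
  obtain rfl | rfl := hA.1
  · exact ⟨(Pd.r, [d]), ⟨r_mem_of_isModel_P0_of_p_notMem hN hA.2 d, by simp [M0, hd]⟩,
      pStrat_lt_pStrat_p (by simp)⟩
  · exact absurd (r_zero_mem_of_isModel_P0 hN) hA.2

theorem p_mem_of_isPerfectModel_P0 (hD : ∃ d : D, d ≠ z) {M : Set (GrAtm Pd D)}
    (hM : IsPerfectModel (P0 D z) M) : (Pd.p, []) ∈ M := by
  obtain ⟨σ, hσ, hperf⟩ := hM
  by_contra hp
  obtain ⟨d, hd⟩ := hD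
  -- `M₀` beats `M` only through `p`, but `p ← ¬r(d)` puts `p` above `r(d)`
  obtain ⟨B, ⟨hBM0, hBM⟩, hlt⟩ := hperf.exists_lt_of_mem_diff isModel_M0
    ⟨r_mem_of_isModel_P0_of_p_notMem hperf.1 hp d, by simp [M0, hd]⟩
  obtain rfl | rfl := hBM0
  · exact (hσ.lt_of_neg_mem (v := fun _ => d) (Or.inl rfl) trivial
      (List.mem_singleton_self _)).not_gt hlt
  · exact hBM (r_zero_mem_of_isModel_P0 hperf.1)

theorem isLeast_M2 : IsLeast {N | isModel N (P2 D z)} (M2 D z) := by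
  refine ⟨?_, fun N hN => ?_⟩
  · rintro γ (rfl | rfl | rfl) v hc hb
    · simp_all [litTrue, SAtm.eval, atomQ, M2]
    · exact Or.inr (by simp_all [SAtm.eval, atomRX])
    · exact Or.inl rfl
  · have hr : (Pd.r, [z]) ∈ N := hN _ (Or.inr (Or.inl rfl)) (fun _ => z) rfl (by simp)
    have hq : (Pd.q, []) ∈ N := hN _ (Or.inr (Or.inr rfl)) (fun _ => z) trivial
      (by simpa [litTrue, SAtm.eval, atomRX])
    simp [M2, Set.insert_subset_iff, hr, hq]

variable (D z)

/-- If the carrier `D` contains at least one element different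
from `0`, then `P₀` and `P₂` have perfect models, `p ∈ M(P₀)` and `p ∉ M(P₂)`
(so the folding step leading from `P₀` to `P₂`, performed with the weaker variable
conditions of the positive folding rule, is incorrect). -/
theorem p_in_M_P0_not_in_M_P2 (hD : ∃ d : D, d ≠ z) :
    (∃ M, IsPerfectModel (P0 D z) M) ∧ (∃ M, IsPerfectModel (P2 D z) M) ∧
    (∀ M, IsPerfectModel (P0 D z) M → ((Pd.p, []) : GrAtm Pd D) ∈ M) ∧
    (∀ M, IsPerfectModel (P2 D z) M → ((Pd.p, []) : GrAtm Pd D) ∉ M) :=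
  ⟨⟨M0 D z, pStrat, locStratWrt_pStrat_P0, perfectModelWrt_M0 hD⟩,
    ⟨M2 D z, pStrat, locStratWrt_pStrat_P2, perfectModelWrt_of_isLeast pStrat isLeast_M2⟩,
    fun _ => p_mem_of_isPerfectModel_P0 hD,
    fun _ hM => hM.eq_of_isLeast isLeast_M2 ▸ by simp [M2]⟩

end Stmt14
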